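/- arXiv:1608.01528 — 4 statements merged into one kernel-verified Lean document; each statement's English description precedes it below -/
import Mathlib

section
/- For every causal tripartite correlation P(a,b,c|x,y,z) with binary inputs x,y,z ∈ {0,1} and binary outputs a,b,c ∈ {0,1}, and for each fixed z ∈ {0,1}, the conditional lazy-guess-your-neighbor's-input (LGYNI) inequality holds: P_A(1|1,0,z) + P_B(1|0,1,z) − P_{AB}(1,1|1,1,z) ≥ 0, where P_A(a|x,y,z) := Σ_{b,c} P(a,b,c|x,y,z), P_B(b|x,y,z) := Σ_{a,c} P(a,b,c|x,y,z), and P_{AB}(a,b|x,y,z) := Σ_c P(a,b,c|x,y,z). -/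
/-- A correlation for the parties in the finite set `S`, where party `i` has input set `X i`
and output set `A i`: a real number `P x a` for each assignment of inputs `x` and outputs `a`
for the parties in `S`. -/
def Corr {ι : Type} (X A : ι → Type) (S : Finset ι) : Type :=
  ((i : {j // j ∈ S}) → X i.1) → ((i : {j // j ∈ S}) → A i.1) → ℝ

/-- `p` is a probability distribution on the finite type `α`. -/
def IsProbDist {α : Type} [Fintype α] (p : α → ℝ) : Prop :=
  (∀ a, 0 ≤ p a) ∧ ∑ a, p a = 1

/-- Restriction of a tuple indexed by `S` to a subset `T ⊆ S`. -/
def restr {ι : Type} {X : ι → Type} {S T : Finset ι} (h : T ⊆ S)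
    (x : (i : {j // j ∈ S}) → X i.1) : (i : {j // j ∈ T}) → X i.1 :=
  fun i => x ⟨i.1, h i.2⟩

theorem erase_sub {ι : Type} [DecidableEq ι] (S : Finset ι) (k : ι) : S.erase k ⊆ S :=
  fun _ hi => Finset.mem_of_mem_erase hi

theorem sdiff_sub {ι : Type} [DecidableEq ι] (S K : Finset ι) : S \ K ⊆ S :=
  fun _ hi => (Finset.mem_sdiff.mp hi).1

/-- Combine a tuple on `K` and a tuple on `S \ K` into a tuple on `S`. -/
def glue {ι : Type} [DecidableEq ι] {X : ι → Type} {S K : Finset ι} (_ : K ⊆ S)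
    (u : (i : {j // j ∈ K}) → X i.1) (v : (i : {j // j ∈ S \ K}) → X i.1) :
    (i : {j // j ∈ S}) → X i.1 :=
  fun i => if h : i.1 ∈ K then u ⟨i.1, h⟩ else v ⟨i.1, Finset.mem_sdiff.mpr ⟨i.2, h⟩⟩

/-- Insert a value for party `k` into a tuple on `S.erase k`, giving a tuple on `S`. -/
def ins {ι : Type} [DecidableEq ι] {X : ι → Type} {S : Finset ι} {k : ι} (_ : k ∈ S)
    (xk : X k) (u : (i : {j // j ∈ S.erase k}) → X i.1) : (i : {j // j ∈ S}) → X i.1 :=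
  fun i => if h : i.1 = k then cast (congrArg X h.symm) xk
    else u ⟨i.1, Finset.mem_erase.mpr ⟨h, i.2⟩⟩

/-- Causal correlations, defined by induction on the number of parties: any single-party
probability distribution is causal; a correlation on a set `S` of at least two parties is
causal iff it is a convex combination, over choices of a party `k ∈ S` acting first, of
products of a single-party distribution for `k` with causal correlations for the remaining
parties `S.erase k` that may depend on the input and output of party `k`. -/
inductive IsCausal {ι : Type} [DecidableEq ι] (X A : ι → Type) [∀ i, Fintype (A i)] :
    (S : Finset ι) → Corr X A S → Prop
  | base (k : ι) (P : Corr X A {k}) (hP : ∀ x, IsProbDist (P x)) : IsCausal X A {k} P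
  | step (S : Finset ι) (hS : 2 ≤ S.card) (P : Corr X A S)
      (q : {j // j ∈ S} → ℝ)
      (Pfirst : (k : {j // j ∈ S}) → X k.1 → A k.1 → ℝ)
      (Prest : (k : {j // j ∈ S}) → X k.1 → A k.1 → Corr X A (S.erase k.1))
      (hq : ∀ k, 0 ≤ q k)
      (hq1 : ∑ k ∈ S.attach, q k = 1)
      (hPfirst : ∀ k xk, IsProbDist (Pfirst k xk))
      (hPrest : ∀ k xk ak, IsCausal X A (S.erase k.1) (Prest k xk ak))
      (hP : ∀ x a, P x a = ∑ k ∈ S.attach, q k * Pfirst k (x k) (a k) *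
            Prest k (x k) (a k) (restr (erase_sub S k.1) x) (restr (erase_sub S k.1) a)) :
      IsCausal X A S P

/-- Tripartite correlations with binary inputs and binary outputs for the three parties
`A`, `B`, `C` (encoding input/output `0` as `false` and `1` as `true`). -/
abbrev Corr3 : Type := Corr (fun _ : Fin 3 => Bool) (fun _ : Fin 3 => Bool) Finset.univ

/-- The triple `(u, v, w)` as an input (or output) assignment for the three parties. -/
def t3 (u v w : Bool) : (i : {j // j ∈ (Finset.univ : Finset (Fin 3))}) → Bool :=
  fun i => ![u, v, w] i.1

/-!
Both sides of the inequality are linear in `P`, so it suffices to check it on each term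
`q_k · P_k(a_k|x_k) · P_{k,x_k,a_k}` of the causal decomposition. If `A` acts first, its marginal
`P_A(1|x)` depends only on its own input, so `P_{AB}(11|11z) ≤ P_A(1|11z) = P_A(1|10z)`;
symmetrically if `B` acts first. If `C` acts first, its input `z` is the same in all three terms
and the inequality is inherited from the bipartite correlations of `A` and `B`. The argument runs
verbatim for any number of parties, any pair of them and arbitrary input and output alphabets,
by induction on the definition of causality.
-/

section Causal

variable {ι : Type} [DecidableEq ι] {X A : ι → Type} {S : Finset ι}

def splitAtEquiv {k : ι} (hk : k ∈ S) :
    ((i : {j // j ∈ S}) → A i.1) ≃ A k × ((i : {j // j ∈ S.erase k}) → A i.1) where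
  toFun a := (a ⟨k, hk⟩, restr (erase_sub S k) a)
  invFun p := ins hk p.1 p.2
  left_inv a := by
    funext ⟨i, hi⟩
    by_cases h : i = k
    · subst h; simp [ins]
    · simp [ins, h, restr]
  right_inv p := by
    refine Prod.ext (by simp [ins]) (funext fun i => ?_)
    simp [ins, restr, (Finset.mem_erase.mp i.2).1]

/-- The term `P_k(a_k|x_k) · P_{k,x_k,a_k}(a_{∖k}|x_{∖k})` of a causal decomposition. -/
def firstThen {k : ι} (hk : k ∈ S) (Pf : X k → A k → ℝ)
    (R : X k → A k → Corr X A (S.erase k)) : Corr X A S := fun x a =>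
  Pf (x ⟨k, hk⟩) (a ⟨k, hk⟩) *
    R (x ⟨k, hk⟩) (a ⟨k, hk⟩) (restr (erase_sub S k) x) (restr (erase_sub S k) a)

theorem eq_sum_firstThen {P : Corr X A S} {q : {j // j ∈ S} → ℝ}
    {Pf : (k : {j // j ∈ S}) → X k.1 → A k.1 → ℝ}
    {Pr : (k : {j // j ∈ S}) → X k.1 → A k.1 → Corr X A (S.erase k.1)}
    (hP : ∀ x a, P x a = ∑ k ∈ S.attach, q k * Pf k (x k) (a k) *
      Pr k (x k) (a k) (restr (erase_sub S k.1) x) (restr (erase_sub S k.1) a)) :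
    P = fun x a => ∑ k ∈ S.attach, q k * firstThen k.2 (Pf k) (Pr k) x a := by
  funext x a
  simp only [hP, mul_assoc]
  rfl

variable [∀ i, Fintype (A i)]

theorem IsCausal.nonneg {P : Corr X A S} (hP : IsCausal X A S P) : ∀ x a, 0 ≤ P x a := by
  induction hP with
  | base k P hP => exact fun x a => (hP x).1 a
  | step S hS P q Pf Pr hq hq1 hPf hPr hP ih =>
    intro x a
    rw [hP]
    exact Finset.sum_nonneg fun k _ =>
      mul_nonneg (mul_nonneg (hq k) ((hPf k (x k)).1 (a k))) (ih k (x k) (a k) _ _)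

theorem sum_splitAtEquiv {k : ι} (hk : k ∈ S)
    (g : A k → ((i : {j // j ∈ S.erase k}) → A i.1) → ℝ) :
    ∑ a, g (a ⟨k, hk⟩) (restr (erase_sub S k) a) = ∑ o, ∑ u, g o u :=
  (Fintype.sum_equiv (splitAtEquiv hk) _ (fun p => g p.1 p.2) fun _ => rfl).trans
    (Fintype.sum_prod_type _)

theorem sum_firstThen {k : ι} (hk : k ∈ S) (Pf : X k → A k → ℝ)
    (R : X k → A k → Corr X A (S.erase k)) (x : (i : {j // j ∈ S}) → X i.1) :
    ∑ a, firstThen hk Pf R x a =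
      ∑ o, Pf (x ⟨k, hk⟩) o * ∑ u, R (x ⟨k, hk⟩) o (restr (erase_sub S k) x) u := by
  simp only [Finset.mul_sum]
  exact sum_splitAtEquiv hk
    (fun o u => Pf (x ⟨k, hk⟩) o * R (x ⟨k, hk⟩) o (restr (erase_sub S k) x) u)

theorem sum_filter_firstThen_restr {k : ι} (hk : k ∈ S) (Pf : X k → A k → ℝ)
    (R : X k → A k → Corr X A (S.erase k)) (x : (i : {j // j ∈ S}) → X i.1)
    (E : ((i : {j // j ∈ S.erase k}) → A i.1) → Prop) [DecidablePred E] :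
    ∑ a with E (restr (erase_sub S k) a), firstThen hk Pf R x a =
      ∑ o, Pf (x ⟨k, hk⟩) o * ∑ u with E u, R (x ⟨k, hk⟩) o (restr (erase_sub S k) x) u := by
  simp only [Finset.sum_filter, Finset.mul_sum, mul_ite, mul_zero]
  exact sum_splitAtEquiv hk
    (fun o u => if E u then Pf (x ⟨k, hk⟩) o * R (x ⟨k, hk⟩) o (restr (erase_sub S k) x) u else 0)

theorem sum_filter_firstThen_first {k : ι} [DecidableEq (A k)] (hk : k ∈ S)
    (Pf : X k → A k → ℝ) (R : X k → A k → Corr X A (S.erase k))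
    (hR : ∀ xk ak x', ∑ u, R xk ak x' u = 1) (x : (i : {j // j ∈ S}) → X i.1) (o : A k) :
    ∑ a with a ⟨k, hk⟩ = o, firstThen hk Pf R x a = Pf (x ⟨k, hk⟩) o := by
  rw [Finset.sum_filter]
  simp only [firstThen]
  rw [sum_splitAtEquiv hk fun o' u =>
    if o' = o then Pf (x ⟨k, hk⟩) o' * R (x ⟨k, hk⟩) o' (restr (erase_sub S k) x) u else 0]
  simp [← Finset.mul_sum, hR]

theorem IsCausal.sum_eq_one {P : Corr X A S} (hP : IsCausal X A S P) :
    ∀ x, ∑ a, P x a = 1 := by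
  induction hP with
  | base k P hP => exact fun x => (hP x).2
  | step S hS P q Pf Pr hq hq1 hPf hPr hP ih =>
    intro x
    obtain rfl := eq_sum_firstThen hP
    rw [Finset.sum_comm, ← hq1]
    refine Finset.sum_congr rfl fun k _ => ?_
    rw [← Finset.mul_sum, sum_firstThen]
    simp [ih, (hPf k _).2]

variable [∀ i, DecidableEq (A i)]

/-- The conditional LGYNI inequality for the parties `i` and `j` of `P`, with `1` replaced by
arbitrary outputs `oi`, `oj`. The inputs `x`, `y`, `w` stand for `(1,0,z)`, `(0,1,z)`, `(1,1,z)`: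
`x` may differ from `w` only at `j`, and `y` only at `i`. -/
def SatisfiesLGYNI (P : Corr X A S) : Prop :=
  ∀ ⦃i j : ι⦄ (hi : i ∈ S) (hj : j ∈ S), i ≠ j → ∀ (oi : A i) (oj : A j)
    (x y w : (k : {l // l ∈ S}) → X k.1),
    (∀ k : {l // l ∈ S}, k.1 ≠ j → x k = w k) → (∀ k : {l // l ∈ S}, k.1 ≠ i → y k = w k) →
    ∑ a with a ⟨i, hi⟩ = oi ∧ a ⟨j, hj⟩ = oj, P w a ≤
      ∑ a with a ⟨i, hi⟩ = oi, P x a + ∑ a with a ⟨j, hj⟩ = oj, P y a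

theorem satisfiesLGYNI_sum {κ : Type} (s : Finset κ) (q : κ → ℝ) (Q : κ → Corr X A S)
    (hq : ∀ k ∈ s, 0 ≤ q k) (hQ : ∀ k ∈ s, SatisfiesLGYNI (Q k)) :
    SatisfiesLGYNI (fun x a => ∑ k ∈ s, q k * Q k x a) := by
  intro i j hi hj hij oi oj x y w hx hy
  have sum_swap : ∀ (E : ((i : {j // j ∈ S}) → A i.1) → Prop) [DecidablePred E] v,
      ∑ a with E a, ∑ k ∈ s, q k * Q k v a = ∑ k ∈ s, q k * ∑ a with E a, Q k v a := by
    intro E _ v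
    rw [Finset.sum_comm]
    simp only [Finset.mul_sum]
  rw [sum_swap, sum_swap, sum_swap, ← Finset.sum_add_distrib]
  refine Finset.sum_le_sum fun k hk => ?_
  rw [← mul_add]
  exact mul_le_mul_of_nonneg_left (hQ k hk hi hj hij oi oj x y w hx hy) (hq k hk)

theorem sum_filter_firstThen_le_first {k : ι} (hk : k ∈ S)
    {Pf : X k → A k → ℝ} {R : X k → A k → Corr X A (S.erase k)}
    (hPf : ∀ xk, IsProbDist (Pf xk)) (hR : ∀ xk ak, IsCausal X A (S.erase k) (R xk ak))
    {x w : (i : {j // j ∈ S}) → X i.1} (hxw : x ⟨k, hk⟩ = w ⟨k, hk⟩) {o : A k}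
    (E : ((i : {j // j ∈ S}) → A i.1) → Prop) [DecidablePred E]
    (hE : ∀ a, E a → a ⟨k, hk⟩ = o) :
    ∑ a with E a, firstThen hk Pf R w a ≤ ∑ a with a ⟨k, hk⟩ = o, firstThen hk Pf R x a := by
  have hR1 : ∀ xk ak v, ∑ u, R xk ak v u = 1 := fun xk ak => (hR xk ak).sum_eq_one
  calc ∑ a with E a, firstThen hk Pf R w a
      ≤ ∑ a with a ⟨k, hk⟩ = o, firstThen hk Pf R w a :=
        Finset.sum_le_sum_of_subset_of_nonneg (Finset.monotone_filter_right _ fun a _ => hE a)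
          fun a _ _ => mul_nonneg ((hPf _).1 _) ((hR _ _).nonneg _ _)
    _ = ∑ a with a ⟨k, hk⟩ = o, firstThen hk Pf R x a := by
        rw [sum_filter_firstThen_first hk Pf R hR1, sum_filter_firstThen_first hk Pf R hR1, hxw]

theorem satisfiesLGYNI_firstThen {k : ι} (hk : k ∈ S)
    {Pf : X k → A k → ℝ} {R : X k → A k → Corr X A (S.erase k)}
    (hPf : ∀ xk, IsProbDist (Pf xk)) (hR : ∀ xk ak, IsCausal X A (S.erase k) (R xk ak))
    (hRLGYNI : ∀ xk ak, SatisfiesLGYNI (R xk ak)) :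
    SatisfiesLGYNI (firstThen hk Pf R) := by
  intro i j hi hj hij oi oj x y w hx hy
  have hnn : ∀ v a, 0 ≤ firstThen hk Pf R v a :=
    fun v a => mul_nonneg ((hPf _).1 _) ((hR _ _).nonneg _ _)
  by_cases hki : k = i
  · subst hki
    exact (sum_filter_firstThen_le_first hk hPf hR (hx _ hij) _ fun _ h => h.1).trans
      (le_add_of_nonneg_right (Finset.sum_nonneg fun a _ => hnn y a))
  by_cases hkj : k = j
  · subst hkj
    exact (sum_filter_firstThen_le_first hk hPf hR (hy _ (Ne.symm hij)) _ fun _ h => h.2).trans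
      (le_add_of_nonneg_left (Finset.sum_nonneg fun a _ => hnn x a))
  have hi' : i ∈ S.erase k := Finset.mem_erase.2 ⟨Ne.symm hki, hi⟩
  have hj' : j ∈ S.erase k := Finset.mem_erase.2 ⟨Ne.symm hkj, hj⟩
  have hxw : x ⟨k, hk⟩ = w ⟨k, hk⟩ := hx _ hkj
  have hyw : y ⟨k, hk⟩ = w ⟨k, hk⟩ := hy _ hki
  calc ∑ a with a ⟨i, hi⟩ = oi ∧ a ⟨j, hj⟩ = oj, firstThen hk Pf R w a
      = ∑ o, Pf (w ⟨k, hk⟩) o * ∑ u with u ⟨i, hi'⟩ = oi ∧ u ⟨j, hj'⟩ = oj,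
          R (w ⟨k, hk⟩) o (restr (erase_sub S k) w) u :=
        sum_filter_firstThen_restr hk Pf R w fun u => u ⟨i, hi'⟩ = oi ∧ u ⟨j, hj'⟩ = oj
    _ ≤ ∑ o, Pf (w ⟨k, hk⟩) o *
          (∑ u with u ⟨i, hi'⟩ = oi, R (w ⟨k, hk⟩) o (restr (erase_sub S k) x) u
            + ∑ u with u ⟨j, hj'⟩ = oj, R (w ⟨k, hk⟩) o (restr (erase_sub S k) y) u) :=
        Finset.sum_le_sum fun o _ => mul_le_mul_of_nonneg_left
          (hRLGYNI _ _ hi' hj' hij oi oj _ _ _ (fun l hl => hx _ hl) (fun l hl => hy _ hl))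
          ((hPf _).1 o)
    _ = ∑ o, Pf (x ⟨k, hk⟩) o * ∑ u with u ⟨i, hi'⟩ = oi,
            R (x ⟨k, hk⟩) o (restr (erase_sub S k) x) u
          + ∑ o, Pf (y ⟨k, hk⟩) o * ∑ u with u ⟨j, hj'⟩ = oj,
            R (y ⟨k, hk⟩) o (restr (erase_sub S k) y) u := by
        rw [hxw, hyw, ← Finset.sum_add_distrib]
        simp only [mul_add]
    _ = ∑ a with a ⟨i, hi⟩ = oi, firstThen hk Pf R x a
          + ∑ a with a ⟨j, hj⟩ = oj, firstThen hk Pf R y a :=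
        congrArg₂ (· + ·) (sum_filter_firstThen_restr hk Pf R x fun u => u ⟨i, hi'⟩ = oi).symm
          (sum_filter_firstThen_restr hk Pf R y fun u => u ⟨j, hj'⟩ = oj).symm

theorem IsCausal.satisfiesLGYNI {P : Corr X A S} (hP : IsCausal X A S P) :
    SatisfiesLGYNI P := by
  induction hP with
  | base k P hP =>
    intro i j hi hj hij
    exact absurd ((Finset.mem_singleton.1 hi).trans (Finset.mem_singleton.1 hj).symm) hij
  | step S hS P q Pf Pr hq hq1 hPf hPr hP ih =>
    obtain rfl := eq_sum_firstThen hP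
    exact satisfiesLGYNI_sum _ q _ (fun k _ => hq k)
      fun k _ => satisfiesLGYNI_firstThen k.2 (hPf k) (hPr k) (ih k)

end Causal

theorem sum_t3 (f : ((i : {j // j ∈ (Finset.univ : Finset (Fin 3))}) → Bool) → ℝ) :
    ∑ a, f a = ∑ u, ∑ v, ∑ w, f (t3 u v w) := by
  let e : ((i : {j // j ∈ (Finset.univ : Finset (Fin 3))}) → Bool) ≃ Bool × Bool × Bool :=
    { toFun a := (a ⟨0, Finset.mem_univ _⟩, a ⟨1, Finset.mem_univ _⟩, a ⟨2, Finset.mem_univ _⟩)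
      invFun p := t3 p.1 p.2.1 p.2.2
      left_inv a := by funext ⟨i, _⟩; fin_cases i <;> rfl
      right_inv p := rfl }
  rw [Fintype.sum_equiv e f (fun p => f (t3 p.1 p.2.1 p.2.2))
    fun a => congrArg f (e.left_inv a).symm]
  simp only [Fintype.sum_prod_type]

/-- every causal tripartite correlation with binary inputs and outputs
satisfies, for each fixed input `z` of the third party, the conditional lazy-guess-your-
neighbor's-input (LGYNI) inequality
`P_A(1|10z) + P_B(1|01z) - P_{AB}(11|11z) ≥ 0`. -/
theorem conditional_lgyni_inequality (P : Corr3)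
    (hP : IsCausal (fun _ : Fin 3 => Bool) (fun _ : Fin 3 => Bool) Finset.univ P)
    (z : Bool) :
    0 ≤ (∑ b : Bool, ∑ c : Bool, P (t3 true false z) (t3 true b c))
      + (∑ a : Bool, ∑ c : Bool, P (t3 false true z) (t3 a true c))
      - (∑ c : Bool, P (t3 true true z) (t3 true true c)) := by
  have h := hP.satisfiesLGYNI (i := 0) (j := 1) (Finset.mem_univ _) (Finset.mem_univ _)
    (by decide) true true (t3 true false z) (t3 false true z) (t3 true true z)
    (by cases z <;> decide) (by cases z <;> decide)
  simp only [Finset.sum_filter, sum_t3, Fintype.sum_bool, t3, Matrix.cons_val_zero,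
    Matrix.cons_val_one, if_true, if_false, Bool.false_eq_true, and_true, and_false, add_zero]
    at h ⊢
  linarith
end

section
/- For every causal tripartite correlation P(a,b,c|x,y,z) with binary inputs x,y,z ∈ {0,1} and binary outputs a,b,c ∈ {0,1}, the causal inequality I_1 ≥ 0 holds, where I_1 = P_{AB}(1,1|1,1,0) + P_{BC}(1,1|0,1,1) + P_{AC}(1,1|1,0,1) − P(1,1,1|1,1,1), with P_{AB}(a,b|x,y,z) := Σ_c P(a,b,c|x,y,z), P_{BC}(b,c|x,y,z) := Σ_a P(a,b,c|x,y,z), and P_{AC}(a,c|x,y,z) := Σ_b P(a,b,c|x,y,z). -/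
/-! The inequality is the three-party case of an `N`-party one: for all inputs `x₀`, `x₁` and
outputs `a`, `P(a | x₁) ≤ ∑ⱼ P_{∖j}(a | x₁ with xⱼ := x₀ⱼ)`. It is proved by induction along
the causal decomposition. It is preserved under sums, so it suffices to treat a term in which
party `k` acts first: its `j = k` summand is nonnegative, and for `j ≠ k` the input of `k` is
untouched, so the `j`-th summand factors as `Pₖ(aₖ | x₁ₖ)` times the corresponding summand for the
remaining parties, to which the induction hypothesis applies. For a single party the only
summand is the total probability `1`. -/

open Finset Function

section restr

variable {ι : Type} [DecidableEq ι] {X : ι → Type} {S : Finset ι}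

theorem restr_update_of_ne {k j : ι} (hj : j ∈ S.erase k) (x : (i : {i // i ∈ S}) → X i.1)
    (v : X j) :
    restr (erase_sub S k) (update x ⟨j, erase_sub S k hj⟩ v) =
      update (restr (erase_sub S k) x) ⟨j, hj⟩ v :=
  update_comp_eq_of_injective' x
    (f := fun i : {i // i ∈ S.erase k} => ⟨i.1, erase_sub S k i.2⟩)
    (fun _ _ h => Subtype.ext (congrArg Subtype.val h :)) ⟨j, hj⟩ v

end restr

theorem Finset.sum_attach_erase {ι M : Type} [DecidableEq ι] [AddCommMonoid M] (S : Finset ι)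
    (k : {i // i ∈ S}) (g : {i // i ∈ S} → M) :
    ∑ j ∈ S.attach.erase k, g j = ∑ j ∈ (S.erase k.1).attach, g ⟨j.1, erase_sub S k.1 j.2⟩ := by
  refine sum_bij'
    (fun j hj => ⟨j.1, mem_erase.2 ⟨fun h => (mem_erase.1 hj).1 (Subtype.ext h), j.2⟩⟩)
    (fun j _ => ⟨j.1, erase_sub S k.1 j.2⟩) (fun _ _ => mem_attach _ _) ?_ (fun _ _ => rfl)
    (fun _ _ => rfl) (fun _ _ => rfl)
  exact fun j _ =>
    mem_erase.2 ⟨fun h => (mem_erase.1 j.2).1 (congrArg Subtype.val h), mem_attach _ _⟩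

namespace Corr

variable {ι : Type} [DecidableEq ι] {X A : ι → Type} [∀ i, Fintype (A i)] {S : Finset ι}

/-- The marginal of `P` on the parties `S ∖ {j}`, evaluated at `a` (whose entry `a j` is
ignored). -/
def margErase (P : Corr X A S) (j : {i // i ∈ S}) (x : (i : {i // i ∈ S}) → X i.1)
    (a : (i : {i // i ∈ S}) → A i.1) : ℝ :=
  ∑ b : A j.1, P x (update a j b)

def firstThen (k : {i // i ∈ S}) (p : X k.1 → A k.1 → ℝ)
    (R : X k.1 → A k.1 → Corr X A (S.erase k.1)) : Corr X A S :=
  fun x a =>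
    p (x k) (a k) * R (x k) (a k) (restr (erase_sub S k.1) x) (restr (erase_sub S k.1) a)

/-- For `x₀ ≡ 0`, `x₁ ≡ 1`, `a ≡ 1` this is the `N`-party form of `I₁ ≥ 0`:
`∑ⱼ P_{∖j}(1…1 | xⱼ = 0, all other inputs 1) ≥ P(1…1 | 1…1)`. -/
def SatisfiesI1 (P : Corr X A S) : Prop :=
  ∀ (x₀ x₁ : (i : {i // i ∈ S}) → X i.1) (a : (i : {i // i ∈ S}) → A i.1),
    P x₁ a ≤ ∑ j ∈ S.attach, P.margErase j (update x₁ j (x₀ j)) a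

theorem margErase_eq_sum_of_subsingleton [Subsingleton {i // i ∈ S}] (P : Corr X A S)
    (j : {i // i ∈ S}) (x : (i : {i // i ∈ S}) → X i.1) (a : (i : {i // i ∈ S}) → A i.1) :
    P.margErase j x a = ∑ a', P x a' :=
  Fintype.sum_bijective (update a j)
    ⟨update_injective a j, fun a' =>
      ⟨a' j, update_eq_iff.2 ⟨rfl, fun i hi => absurd (Subsingleton.elim i j) hi⟩⟩⟩ _ _
    fun _ => rfl

theorem satisfiesI1_of_isProbDist {k : ι} {P : Corr X A {k}} (hP : ∀ x, IsProbDist (P x)) :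
    P.SatisfiesI1 := by
  have : Subsingleton {i // i ∈ ({k} : Finset ι)} :=
    ⟨fun u v => Subtype.ext ((mem_singleton.1 u.2).trans (mem_singleton.1 v.2).symm)⟩
  intro x₀ x₁ a
  rw [← univ_eq_attach, Fintype.sum_subsingleton _ ⟨k, mem_singleton_self k⟩,
    margErase_eq_sum_of_subsingleton, (hP _).2, ← (hP x₁).2]
  exact single_le_sum (fun a' _ => (hP x₁).1 a') (mem_univ a)

theorem SatisfiesI1.firstThen {k : {i // i ∈ S}} {p : X k.1 → A k.1 → ℝ}
    {R : X k.1 → A k.1 → Corr X A (S.erase k.1)} (hp : ∀ xk ak, 0 ≤ p xk ak)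
    (hR₀ : ∀ xk ak x a, 0 ≤ R xk ak x a) (hR : ∀ xk ak, (R xk ak).SatisfiesI1) :
    (Corr.firstThen k p R).SatisfiesI1 := by
  intro x₀ x₁ a
  have hfirst : 0 ≤ (Corr.firstThen k p R).margErase k (update x₁ k (x₀ k)) a :=
    sum_nonneg fun _ _ => mul_nonneg (hp _ _) (hR₀ _ _ _ _)
  have hlater : ∀ j ∈ (S.erase k.1).attach,
      (Corr.firstThen k p R).margErase ⟨j.1, erase_sub S k.1 j.2⟩
        (update x₁ ⟨j.1, erase_sub S k.1 j.2⟩ (x₀ ⟨j.1, erase_sub S k.1 j.2⟩)) a =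
      p (x₁ k) (a k) * (R (x₁ k) (a k)).margErase j
        (update (restr (erase_sub S k.1) x₁) j (restr (erase_sub S k.1) x₀ j))
        (restr (erase_sub S k.1) a) := by
    intro j _
    have hkj : k ≠ ⟨j.1, erase_sub S k.1 j.2⟩ := fun h =>
      (mem_erase.1 j.2).1 (congrArg Subtype.val h).symm
    simp only [margErase, Corr.firstThen, mul_sum]
    refine sum_congr rfl fun b _ => ?_
    rw [update_of_ne hkj, update_of_ne hkj, restr_update_of_ne j.2, restr_update_of_ne j.2]
    rfl
  rw [← add_sum_erase _ _ (mem_attach _ k), sum_attach_erase, sum_congr rfl hlater, ← mul_sum]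
  have hR' := mul_le_mul_of_nonneg_left (hR (x₁ k) (a k) (restr (erase_sub S k.1) x₀)
    (restr (erase_sub S k.1) x₁) (restr (erase_sub S k.1) a)) (hp (x₁ k) (a k))
  exact hR'.trans (le_add_of_nonneg_left hfirst)

theorem SatisfiesI1.sum {κ : Type} {s : Finset κ} {F : κ → Corr X A S}
    (hF : ∀ k ∈ s, (F k).SatisfiesI1) : SatisfiesI1 (fun x a => ∑ k ∈ s, F k x a) := by
  intro x₀ x₁ a
  have hmarg : ∀ j x, margErase (fun x a => ∑ k ∈ s, F k x a) j x a =
      ∑ k ∈ s, (F k).margErase j x a := fun _ _ => sum_comm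
  simp only [hmarg]
  rw [sum_comm]
  exact sum_le_sum fun k hk => hF k hk x₀ x₁ a

end Corr

namespace IsCausal

variable {ι : Type} [DecidableEq ι] {X A : ι → Type} [∀ i, Fintype (A i)] {S : Finset ι}
  {P : Corr X A S}

theorem nonneg_s14 (h : IsCausal X A S P) (x : (i : {i // i ∈ S}) → X i.1)
    (a : (i : {i // i ∈ S}) → A i.1) : 0 ≤ P x a := by
  induction h with
  | base k P hP => exact (hP x).1 a
  | step S _ P q Pfirst _ hq _ hPfirst _ hP ih =>
    rw [hP]
    exact sum_nonneg fun k _ => mul_nonneg (mul_nonneg (hq k) ((hPfirst k _).1 _)) (ih k _ _ _ _)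

theorem satisfiesI1 (h : IsCausal X A S P) : P.SatisfiesI1 := by
  induction h with
  | base _ _ hP => exact Corr.satisfiesI1_of_isProbDist hP
  | step S _ P q Pfirst Prest hq _ hPfirst hPrest hP ih =>
    have hPsum : P = fun x a => ∑ k ∈ S.attach,
        Corr.firstThen k (fun xk ak => q k * Pfirst k xk ak) (Prest k) x a :=
      funext fun x => funext fun a => hP x a
    rw [hPsum]
    exact Corr.SatisfiesI1.sum fun k _ => Corr.SatisfiesI1.firstThen
      (fun xk ak => mul_nonneg (hq k) ((hPfirst k xk).1 ak))
      (fun xk ak => (hPrest k xk ak).nonneg_s14) (ih k)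

end IsCausal

/-- every causal tripartite correlation with binary inputs and outputs
satisfies the causal inequality `I_1 ≥ 0`, i.e.,
`P_{AB}(11|110) + P_{BC}(11|011) + P_{AC}(11|101) - P(111|111) ≥ 0`. -/
theorem causal_inequality_I1 (P : Corr3)
    (hP : IsCausal (fun _ : Fin 3 => Bool) (fun _ : Fin 3 => Bool) Finset.univ P) :
    0 ≤ (∑ c : Bool, P (t3 true true false) (t3 true true c))
      + (∑ a : Bool, P (t3 false true true) (t3 a true true))
      + (∑ b : Bool, P (t3 true false true) (t3 true b true))
      - P (t3 true true true) (t3 true true true) := by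
  have h := hP.satisfiesI1 (fun _ => false) (fun _ => true) (fun _ => true)
  have hone : (fun _ => true) = t3 true true true := by decide
  have hA : ∀ b, update (t3 true true true) ⟨0, mem_univ 0⟩ b = t3 b true true := by decide
  have hB : ∀ b, update (t3 true true true) ⟨1, mem_univ 1⟩ b = t3 true b true := by decide
  have hC : ∀ b, update (t3 true true true) ⟨2, mem_univ 2⟩ b = t3 true true b := by decide
  simp only [Corr.margErase, sum_attach_univ, Fin.sum_univ_three, hone, hA, hB, hC] at h
  linarith
end

section
/- For every causal tripartite correlation P(a,b,c|x,y,z) with binary inputs x,y,z ∈ {0,1} and binary outputs a,b,c ∈ {0,1}, the causal inequality I_2 ≥ 0 holds, where I_2 = P_A(1|1,0,0) + P_B(1|0,1,0) + P_C(1|0,0,1) − P(1,1,1|1,1,1), with P_A(a|x,y,z) := Σ_{b,c} P(a,b,c|x,y,z), P_B(b|x,y,z) := Σ_{a,c} P(a,b,c|x,y,z), and P_C(c|x,y,z) := Σ_{a,b} P(a,b,c|x,y,z). -/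
theorem IsProbDist.le_one {α : Type} [Fintype α] {p : α → ℝ} (h : IsProbDist p) (a : α) :
    p a ≤ 1 :=
  h.2 ▸ Finset.single_le_sum (fun b _ => h.1 b) (Finset.mem_univ a)

section Split

variable {ι : Type} [DecidableEq ι] {X : ι → Type} {S : Finset ι} {k : ι} (hk : k ∈ S)

theorem restr_ins (xk : X k) (u : (i : {j // j ∈ S.erase k}) → X i.1) :
    restr (erase_sub S k) (ins hk xk u) = u := by
  funext i
  exact dif_neg (Finset.mem_erase.mp i.2).1

theorem ins_apply_self (xk : X k) (u : (i : {j // j ∈ S.erase k}) → X i.1) :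
    ins hk xk u ⟨k, hk⟩ = xk :=
  (dif_pos rfl).trans (eq_of_heq (cast_heq _ _))

theorem ins_restr (x : (i : {j // j ∈ S}) → X i.1) :
    ins hk (x ⟨k, hk⟩) (restr (erase_sub S k) x) = x := by
  funext ⟨i, hi⟩
  by_cases h : i = k
  · subst h
    exact ins_apply_self hk _ _
  · exact dif_neg h

def insEquiv : X k × ((i : {j // j ∈ S.erase k}) → X i.1) ≃ ((i : {j // j ∈ S}) → X i.1) where
  toFun p := ins hk p.1 p.2
  invFun x := (x ⟨k, hk⟩, restr (erase_sub S k) x)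
  left_inv p := by simp only [ins_apply_self, restr_ins]
  right_inv := ins_restr hk

theorem sum_eq_sum_sum_ins [∀ i, Fintype (X i)] (f : ((i : {j // j ∈ S}) → X i.1) → ℝ) :
    ∑ x, f x = ∑ xk : X k, ∑ u, f (ins hk xk u) := by
  rw [← (insEquiv hk).sum_comp, Fintype.sum_prod_type]
  rfl

theorem sum_filter_apply_eq_sum_ins [∀ i, Fintype (X i)] [DecidableEq (X k)] (xk : X k)
    (f : ((i : {j // j ∈ S}) → X i.1) → ℝ) :
    ∑ x with x ⟨k, hk⟩ = xk, f x = ∑ u, f (ins hk xk u) := by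
  simp only [Finset.sum_filter, sum_eq_sum_sum_ins hk, ins_apply_self]
  rw [Finset.sum_comm, Fintype.sum_congr _ _ fun u => Fintype.sum_ite_eq' xk _]

end Split

section Decomposition

variable {ι : Type} [DecidableEq ι] {X A : ι → Type} [∀ i, Fintype (A i)] {S : Finset ι}

/-- The outermost layer of a causal decomposition; of the correlations of the remaining parties
only the fact that they are probability distributions is kept. -/
structure CausalDecomposition (P : Corr X A S) where
  weight : {j // j ∈ S} → ℝ
  first : (k : {j // j ∈ S}) → X k.1 → A k.1 → ℝ
  rest : (k : {j // j ∈ S}) → X k.1 → A k.1 → Corr X A (S.erase k.1)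
  weight_nonneg : ∀ k, 0 ≤ weight k
  isProbDist_first : ∀ k xk, IsProbDist (first k xk)
  isProbDist_rest : ∀ k xk ak xr, IsProbDist (rest k xk ak xr)
  eq_sum : ∀ x a, P x a = ∑ k ∈ S.attach, weight k * first k (x k) (a k) *
    rest k (x k) (a k) (restr (erase_sub S k.1) x) (restr (erase_sub S k.1) a)

namespace CausalDecomposition

variable {P : Corr X A S} (d : CausalDecomposition P)

theorem term_nonneg (k : {j // j ∈ S}) (x : (i : {j // j ∈ S}) → X i.1)
    (a : (i : {j // j ∈ S}) → A i.1) :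
    0 ≤ d.weight k * d.first k (x k) (a k) *
      d.rest k (x k) (a k) (restr (erase_sub S k.1) x) (restr (erase_sub S k.1) a) :=
  mul_nonneg (mul_nonneg (d.weight_nonneg k) ((d.isProbDist_first k _).1 _))
    ((d.isProbDist_rest k _ _ _).1 _)

theorem nonneg (d : CausalDecomposition P) (x : (i : {j // j ∈ S}) → X i.1)
    (a : (i : {j // j ∈ S}) → A i.1) : 0 ≤ P x a := by
  rw [d.eq_sum]
  exact Finset.sum_nonneg fun k _ => d.term_nonneg k x a

theorem sum_term_ins (k : {j // j ∈ S}) (x : (i : {j // j ∈ S}) → X i.1) (ak : A k.1) :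
    ∑ u, d.weight k * d.first k (x k) (ins k.2 ak u k) *
      d.rest k (x k) (ins k.2 ak u k) (restr (erase_sub S k.1) x)
        (restr (erase_sub S k.1) (ins k.2 ak u)) = d.weight k * d.first k (x k) ak := by
  obtain ⟨k, hk⟩ := k
  simp only [ins_apply_self, restr_ins]
  rw [← Finset.mul_sum, (d.isProbDist_rest _ _ ak (restr (erase_sub S k) x)).2, mul_one]

theorem sum_eq_sum_weight (x : (i : {j // j ∈ S}) → X i.1) :
    ∑ a, P x a = ∑ k ∈ S.attach, d.weight k := by
  simp only [d.eq_sum]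
  rw [Finset.sum_comm]
  refine Finset.sum_congr rfl fun k _ => ?_
  simp only [sum_eq_sum_sum_ins k.2, d.sum_term_ins, ← Finset.mul_sum,
    (d.isProbDist_first k _).2, mul_one]

theorem weight_mul_first_le_sum_filter [∀ i, DecidableEq (A i)] (k : {j // j ∈ S})
    (x : (i : {j // j ∈ S}) → X i.1) (ak : A k.1) :
    d.weight k * d.first k (x k) ak ≤ ∑ a with a k = ak, P x a := by
  rw [sum_filter_apply_eq_sum_ins k.2, ← d.sum_term_ins]
  refine Finset.sum_le_sum fun u _ => ?_
  rw [d.eq_sum]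
  exact Finset.single_le_sum (f := fun k => _) (fun k _ => d.term_nonneg k x _)
    (Finset.mem_attach _ k)

theorem le_sum_weight_mul_first (x : (i : {j // j ∈ S}) → X i.1)
    (a : (i : {j // j ∈ S}) → A i.1) :
    P x a ≤ ∑ k ∈ S.attach, d.weight k * d.first k (x k) (a k) := by
  rw [d.eq_sum]
  refine Finset.sum_le_sum fun k _ => mul_le_of_le_one_right ?_ ?_
  · exact mul_nonneg (d.weight_nonneg k) ((d.isProbDist_first k _).1 _)
  · exact (d.isProbDist_rest k _ _ _).le_one _

end CausalDecomposition

namespace IsCausal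

theorem isProbDist {P : Corr X A S} (h : IsCausal X A S P) (x : (i : {j // j ∈ S}) → X i.1) :
    IsProbDist (P x) := by
  induction h with
  | base k P hP => exact hP x
  | step S _ P q Pfirst Prest hq hq1 hPfirst _ hP ih =>
    let d : CausalDecomposition P := ⟨q, Pfirst, Prest, hq, hPfirst, ih, hP⟩
    exact ⟨d.nonneg x, (d.sum_eq_sum_weight x).trans hq1⟩

theorem nonempty_causalDecomposition {P : Corr X A S} (h : IsCausal X A S P)
    (hS : 2 ≤ S.card) : Nonempty (CausalDecomposition P) := by
  cases h with
  | base k P hP => simp at hS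
  | step S _ P q Pfirst Prest hq _ hPfirst hPrest hP =>
    exact ⟨⟨q, Pfirst, Prest, hq, hPfirst, fun k xk ak => (hPrest k xk ak).isProbDist, hP⟩⟩

end IsCausal

end Decomposition

theorem sum_attach_univ_fin_three (f : {j // j ∈ (Finset.univ : Finset (Fin 3))} → ℝ) :
    ∑ k ∈ Finset.univ.attach, f k =
      f ⟨0, Finset.mem_univ _⟩ + f ⟨1, Finset.mem_univ _⟩ + f ⟨2, Finset.mem_univ _⟩ := by
  rw [Finset.attach_eq_univ, ← (Equiv.subtypeUnivEquiv Finset.mem_univ).symm.sum_comp]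
  exact Fin.sum_univ_three _

def t3Equiv : Bool × Bool × Bool ≃ ((i : {j // j ∈ (Finset.univ : Finset (Fin 3))}) → Bool) where
  toFun p := t3 p.1 p.2.1 p.2.2
  invFun x := (x ⟨0, Finset.mem_univ _⟩, x ⟨1, Finset.mem_univ _⟩, x ⟨2, Finset.mem_univ _⟩)
  left_inv _ := rfl
  right_inv x := by
    funext ⟨i, _⟩
    fin_cases i <;> rfl

theorem sum_eq_sum_t3 (f : ((i : {j // j ∈ (Finset.univ : Finset (Fin 3))}) → Bool) → ℝ) :
    ∑ a, f a = ∑ u : Bool, ∑ v : Bool, ∑ w : Bool, f (t3 u v w) := by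
  rw [← t3Equiv.sum_comp, Fintype.sum_prod_type]
  simp only [Fintype.sum_prod_type]
  rfl

@[simp] theorem t3_apply_zero (u v w : Bool) (h : (0 : Fin 3) ∈ Finset.univ) :
    t3 u v w ⟨0, h⟩ = u := rfl

@[simp] theorem t3_apply_one (u v w : Bool) (h : (1 : Fin 3) ∈ Finset.univ) :
    t3 u v w ⟨1, h⟩ = v := rfl

@[simp] theorem t3_apply_two (u v w : Bool) (h : (2 : Fin 3) ∈ Finset.univ) :
    t3 u v w ⟨2, h⟩ = w := rfl

section Marginals

variable (f : ((i : {j // j ∈ (Finset.univ : Finset (Fin 3))}) → Bool) → ℝ) (u : Bool)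

theorem sum_filter_apply_zero_eq :
    ∑ a with a ⟨0, Finset.mem_univ _⟩ = u, f a = ∑ b : Bool, ∑ c : Bool, f (t3 u b c) := by
  cases u <;> simp [Finset.sum_filter, sum_eq_sum_t3]

theorem sum_filter_apply_one_eq :
    ∑ a with a ⟨1, Finset.mem_univ _⟩ = u, f a = ∑ a : Bool, ∑ c : Bool, f (t3 a u c) := by
  cases u <;> simp [Finset.sum_filter, sum_eq_sum_t3]

theorem sum_filter_apply_two_eq :
    ∑ a with a ⟨2, Finset.mem_univ _⟩ = u, f a = ∑ a : Bool, ∑ b : Bool, f (t3 a b u) := by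
  cases u <;> simp [Finset.sum_filter, sum_eq_sum_t3]

end Marginals

/-- every causal tripartite correlation with binary inputs and outputs
satisfies the causal inequality `I_2 ≥ 0`, i.e.,
`P_A(1|100) + P_B(1|010) + P_C(1|001) - P(111|111) ≥ 0`. -/
theorem causal_inequality_I2 (P : Corr3)
    (hP : IsCausal (fun _ : Fin 3 => Bool) (fun _ : Fin 3 => Bool) Finset.univ P) :
    0 ≤ (∑ b : Bool, ∑ c : Bool, P (t3 true false false) (t3 true b c))
      + (∑ a : Bool, ∑ c : Bool, P (t3 false true false) (t3 a true c))
      + (∑ a : Bool, ∑ b : Bool, P (t3 false false true) (t3 a b true))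
      - P (t3 true true true) (t3 true true true) := by
  obtain ⟨d⟩ := hP.nonempty_causalDecomposition (by simp)
  have hA := d.weight_mul_first_le_sum_filter ⟨0, Finset.mem_univ _⟩ (t3 true false false) true
  have hB := d.weight_mul_first_le_sum_filter ⟨1, Finset.mem_univ _⟩ (t3 false true false) true
  have hC := d.weight_mul_first_le_sum_filter ⟨2, Finset.mem_univ _⟩ (t3 false false true) true
  have h111 := d.le_sum_weight_mul_first (t3 true true true) (t3 true true true)
  rw [sum_attach_univ_fin_three] at h111
  rw [sum_filter_apply_zero_eq] at hA
  rw [sum_filter_apply_one_eq] at hB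
  rw [sum_filter_apply_two_eq] at hC
  simp only [t3_apply_zero, t3_apply_one, t3_apply_two] at hA hB hC h111
  linarith
end

section
/- For every causal tripartite correlation P(a,b,c|x,y,z) with binary inputs x,y,z ∈ {0,1} and binary outputs a,b,c ∈ {0,1}, the causal inequality I_3 ≥ 0 holds, where I_3 = 2 − P_{AB}(0,1|1,1,0) − P_{BC}(0,1|0,1,1) − P_{AC}(1,0|1,0,1), with P_{AB}(a,b|x,y,z) := Σ_c P(a,b,c|x,y,z), P_{BC}(b,c|x,y,z) := Σ_a P(a,b,c|x,y,z), and P_{AC}(a,c|x,y,z) := Σ_b P(a,b,c|x,y,z). -/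
/-!
Decompose `P = ∑ₖ qₖ Pₖ(aₖ|xₖ) P_{k,xₖ,aₖ}` according to which party acts first. In the branch
where party `k` acts first, an event that fixes `k`'s output has probability at most
`Pₖ(aₖ|xₖ)`, and any event has probability at most `1`. Each party occurs in exactly two of the
three terms of `I₃`, both times with input `1` and with opposite outputs, so the three terms
together weigh at most `Pₖ(0|1) + Pₖ(1|1) + 1 = 2` in branch `k`; averaging over `k` with the
weights `qₖ` gives `I₃ ≥ 0`.
-/

open Finset

theorem IsProbDist.sum_le_one {α : Type} [Fintype α] {p : α → ℝ} (hp : IsProbDist p)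
    (s : Finset α) : ∑ a ∈ s, p a ≤ 1 :=
  hp.2 ▸ sum_le_univ_sum_of_nonneg hp.1

theorem IsProbDist.add_le_one {α : Type} [Fintype α] {p : α → ℝ} (hp : IsProbDist p) {a b : α}
    (hab : a ≠ b) : p a + p b ≤ 1 := by
  classical
  simpa [sum_pair hab] using hp.sum_le_one {a, b}

theorem isProbDist_sum_mul {κ α : Type} [Fintype α] {s : Finset κ} {w : κ → ℝ}
    {p : κ → α → ℝ} (hw : ∀ k ∈ s, 0 ≤ w k) (hw1 : ∑ k ∈ s, w k = 1)
    (hp : ∀ k ∈ s, IsProbDist (p k)) : IsProbDist (fun a => ∑ k ∈ s, w k * p k a) := by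
  refine ⟨fun a => sum_nonneg fun k hk => mul_nonneg (hw k hk) ((hp k hk).1 a), ?_⟩
  rw [sum_comm, ← hw1]
  exact sum_congr rfl fun k hk => by rw [← mul_sum, (hp k hk).2, mul_one]

section FirstBranch

variable {ι : Type} [DecidableEq ι] {X A : ι → Type} {S : Finset ι} {k : ι}

def eraseEquiv (hk : k ∈ S) :
    ((i : {j // j ∈ S}) → A i.1) ≃ A k × ((i : {j // j ∈ S.erase k}) → A i.1) where
  toFun a := (a ⟨k, hk⟩, restr (erase_sub S k) a)
  invFun p := ins hk p.1 p.2
  left_inv a := by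
    funext ⟨i, hi⟩
    by_cases h : i = k
    · subst h; simp [ins]
    · simp [ins, h, restr]
  right_inv p := by
    refine Prod.ext (by simp [ins]) (funext fun ⟨i, hi⟩ => ?_)
    simp [restr, ins, (Finset.mem_erase.mp hi).1]

-- The summand `Pₖ(aₖ|xₖ) P_{k,xₖ,aₖ}(a_{∖k}|x_{∖k})` of the causal decomposition, without `qₖ`.
def firstBranch (hk : k ∈ S) (Pf : X k → A k → ℝ) (Pr : X k → A k → Corr X A (S.erase k)) :
    Corr X A S :=
  fun x a => Pf (x ⟨k, hk⟩) (a ⟨k, hk⟩) *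
    Pr (x ⟨k, hk⟩) (a ⟨k, hk⟩) (restr (erase_sub S k) x) (restr (erase_sub S k) a)

variable [∀ i, Fintype (A i)] (hk : k ∈ S) {Pf : X k → A k → ℝ}
  {Pr : X k → A k → Corr X A (S.erase k)} (hPf : ∀ xk, IsProbDist (Pf xk))
  (hPr : ∀ xk ak x', IsProbDist (Pr xk ak x'))
include hPf hPr

theorem isProbDist_firstBranch (x : (i : {j // j ∈ S}) → X i.1) :
    IsProbDist (firstBranch hk Pf Pr x) := by
  refine ⟨fun a => mul_nonneg ((hPf _).1 _) ((hPr _ _ _).1 _), ?_⟩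
  set xk := x ⟨k, hk⟩
  set x' := restr (erase_sub S k) x
  calc ∑ a, firstBranch hk Pf Pr x a = ∑ α, ∑ u, Pf xk α * Pr xk α x' u :=
        (Fintype.sum_equiv (eraseEquiv hk) _ _ fun _ => rfl).trans
          (Fintype.sum_prod_type' fun α u => Pf xk α * Pr xk α x' u)
    _ = ∑ α, Pf xk α :=
        sum_congr rfl fun α _ => (mul_sum _ _ _).symm.trans (by rw [(hPr xk α x').2, mul_one])
    _ = 1 := (hPf xk).2

theorem sum_firstBranch_le (x : (i : {j // j ∈ S}) → X i.1)
    {E : Finset ((i : {j // j ∈ S}) → A i.1)} {α : A k} (hE : ∀ a ∈ E, a ⟨k, hk⟩ = α) :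
    ∑ a ∈ E, firstBranch hk Pf Pr x a ≤ Pf (x ⟨k, hk⟩) α := by
  classical
  have hinj : Set.InjOn (restr (erase_sub S k)) E := fun a ha a' ha' h =>
    (eraseEquiv hk).injective (Prod.ext ((hE a ha).trans (hE a' ha').symm) h)
  calc ∑ a ∈ E, firstBranch hk Pf Pr x a
      = Pf (x ⟨k, hk⟩) α *
          ∑ u ∈ E.image (restr (erase_sub S k)), Pr (x ⟨k, hk⟩) α (restr (erase_sub S k) x) u := by
        rw [sum_image hinj, mul_sum]
        exact sum_congr rfl fun a ha => by simp only [firstBranch, hE a ha]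
    _ ≤ Pf (x ⟨k, hk⟩) α * 1 :=
        mul_le_mul_of_nonneg_left ((hPr _ _ _).sum_le_one _) ((hPf _).1 α)
    _ = Pf (x ⟨k, hk⟩) α := mul_one _

theorem sum_firstBranch_add_sum_firstBranch_le (x x' : (i : {j // j ∈ S}) → X i.1)
    (hx : x ⟨k, hk⟩ = x' ⟨k, hk⟩) (E E' : Finset ((i : {j // j ∈ S}) → A i.1)) {α α' : A k}
    (hα : α ≠ α') (hE : ∀ a ∈ E, a ⟨k, hk⟩ = α) (hE' : ∀ a ∈ E', a ⟨k, hk⟩ = α') :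
    ∑ a ∈ E, firstBranch hk Pf Pr x a + ∑ a ∈ E', firstBranch hk Pf Pr x' a ≤ 1 := by
  have h' := sum_firstBranch_le hk hPf hPr x' hE'
  rw [← hx] at h'
  linarith [sum_firstBranch_le hk hPf hPr x hE, (hPf (x ⟨k, hk⟩)).add_le_one hα]

end FirstBranch

section Causal

variable {ι : Type} [DecidableEq ι] {X A : ι → Type} [∀ i, Fintype (A i)] {S : Finset ι}
  {P : Corr X A S}

theorem IsCausal.isProbDist_s16 (h : IsCausal X A S P) (x : (i : {j // j ∈ S}) → X i.1) :
    IsProbDist (P x) := by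
  induction h with
  | base _ _ hP => exact hP x
  | step S _ P q Pf Pr hq hq1 hPf _ hP ih =>
    have hPx : P x = fun a => ∑ k ∈ S.attach, q k * firstBranch k.2 (Pf k) (Pr k) x a :=
      funext fun a => (hP x a).trans (sum_congr rfl fun _ _ => mul_assoc _ _ _)
    rw [hPx]
    exact isProbDist_sum_mul (fun k _ => hq k) hq1
      fun k _ => isProbDist_firstBranch k.2 (hPf k) (fun xk ak => ih k xk ak) x

theorem IsCausal.exists_eq_sum_firstBranch (h : IsCausal X A S P) (hS : 2 ≤ S.card) :
    ∃ (q : {j // j ∈ S} → ℝ) (Pf : (k : {j // j ∈ S}) → X k.1 → A k.1 → ℝ)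
      (Pr : (k : {j // j ∈ S}) → X k.1 → A k.1 → Corr X A (S.erase k.1)),
      (∀ k, 0 ≤ q k) ∧ ∑ k ∈ S.attach, q k = 1 ∧ (∀ k xk, IsProbDist (Pf k xk)) ∧
      (∀ k xk ak x', IsProbDist (Pr k xk ak x')) ∧
      ∀ x a, P x a = ∑ k ∈ S.attach, q k * firstBranch k.2 (Pf k) (Pr k) x a := by
  cases h with
  | base => simp at hS
  | step _ _ _ q Pf Pr hq hq1 hPf hPr hP =>
    exact ⟨q, Pf, Pr, hq, hq1, hPf, fun k xk ak => (hPr k xk ak).isProbDist_s16,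
      fun x a => (hP x a).trans (sum_congr rfl fun _ _ => mul_assoc _ _ _)⟩

end Causal

theorem t3_inj {u v w u' v' w' : Bool} (h : t3 u v w = t3 u' v' w') : u = u' ∧ v = v' ∧ w = w' :=
  ⟨congrFun h ⟨0, mem_univ 0⟩, congrFun h ⟨1, mem_univ 1⟩, congrFun h ⟨2, mem_univ 2⟩⟩

theorem sum_firstBranch_I3_le_two (k : Fin 3) {Pf : Bool → Bool → ℝ}
    {Pr : Bool → Bool → Corr (fun _ : Fin 3 => Bool) (fun _ : Fin 3 => Bool) (univ.erase k)}
    (hPf : ∀ xk, IsProbDist (Pf xk)) (hPr : ∀ xk ak x', IsProbDist (Pr xk ak x')) :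
    ∑ a ∈ univ.image (t3 false true),
          (firstBranch (mem_univ k) Pf Pr : Corr3) (t3 true true false) a
      + ∑ a ∈ univ.image (fun a => t3 a false true),
          (firstBranch (mem_univ k) Pf Pr : Corr3) (t3 false true true) a
      + ∑ a ∈ univ.image (fun b => t3 true b false),
          (firstBranch (mem_univ k) Pf Pr : Corr3) (t3 true false true) a ≤ 2 := by
  have hle := fun x E => (isProbDist_firstBranch (X := fun _ : Fin 3 => Bool)
    (A := fun _ => Bool) (mem_univ k) hPf hPr x).sum_le_one E
  have hpair := sum_firstBranch_add_sum_firstBranch_le (X := fun _ : Fin 3 => Bool)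
    (A := fun _ => Bool) (mem_univ k) hPf hPr
  obtain rfl | rfl | rfl : k = 0 ∨ k = 1 ∨ k = 2 := by fin_cases k <;> simp
  · linarith [hle (t3 false true true) (univ.image fun a => t3 a false true),
      hpair (t3 true true false) (t3 true false true) rfl
        (univ.image (t3 false true)) (univ.image fun b => t3 true b false)
        Bool.false_ne_true (by simp [t3]) (by simp [t3])]
  · linarith [hle (t3 true false true) (univ.image fun b => t3 true b false),
      hpair (t3 true true false) (t3 false true true) rfl
        (univ.image (t3 false true)) (univ.image fun a => t3 a false true)
        Bool.false_ne_true.symm (by simp [t3]) (by simp [t3])]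
  · linarith [hle (t3 true true false) (univ.image (t3 false true)),
      hpair (t3 false true true) (t3 true false true) rfl
        (univ.image fun a => t3 a false true) (univ.image fun b => t3 true b false)
        Bool.false_ne_true.symm (by simp [t3]) (by simp [t3])]

/-- every causal tripartite correlation with binary inputs and outputs
satisfies the causal inequality `I_3 ≥ 0`, i.e.,
`2 - P_{AB}(01|110) - P_{BC}(01|011) - P_{AC}(10|101) ≥ 0`. -/
theorem causal_inequality_I3 (P : Corr3)
    (hP : IsCausal (fun _ : Fin 3 => Bool) (fun _ : Fin 3 => Bool) Finset.univ P) :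
    0 ≤ 2 - (∑ c : Bool, P (t3 true true false) (t3 false true c))
      - (∑ a : Bool, P (t3 false true true) (t3 a false true))
      - (∑ b : Bool, P (t3 true false true) (t3 true b false)) := by
  obtain ⟨q, Pf, Pr, hq, hq1, hPf, hPr, hPq⟩ := hP.exists_eq_sum_firstBranch (by decide)
  have hsum : ∀ x E, ∑ a ∈ E, P x a =
      ∑ k ∈ univ.attach, q k * ∑ a ∈ E, (firstBranch k.2 (Pf k) (Pr k) : Corr3) x a :=
    fun x E => by simp only [hPq, mul_sum]; exact sum_comm
  rw [← sum_image (g := t3 false true) fun c _ c' _ h => (t3_inj h).2.2,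
    ← sum_image (g := fun a => t3 a false true) fun a _ a' _ h => (t3_inj h).1,
    ← sum_image (g := fun b => t3 true b false) fun b _ b' _ h => (t3_inj h).2.1,
    hsum, hsum, hsum]
  have hbranch := sum_le_sum (s := (univ : Finset (Fin 3)).attach) fun k _ =>
    mul_le_mul_of_nonneg_left (sum_firstBranch_I3_le_two k.1 (hPf k) (hPr k)) (hq k)
  rw [← sum_mul, hq1] at hbranch
  simp only [mul_add, sum_add_distrib] at hbranch
  linarith
end
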